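/- arXiv:1009.1022 — 2 statements merged into one kernel-verified Lean document; each statement's English description precedes it below -/
import Mathlib

section
/- Let (X, 𝓘) be a Polish ideal space such that every 𝓘-positive Borel set contains an 𝓘-positive closed set. Let 𝓐 be a partition of X into closed sets, each belonging to 𝓘, which is strongly Borel measurable: for every closed set C ⊆ X, the saturation ⋃{A ∈ 𝓐 : A ∩ C ≠ ∅} is Borel. Then there exists a subfamily 𝓐₀ ⊆ 𝓐 such that ⋃𝓐₀ is completely 𝓘-nonmeasurable. -/
/-!
Call `x` a point of positivity of `G` if every neighbourhood of `x` meets `G` in an `𝓘`-positive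
set; by second countability every positive set has one. If `G` is closed and `x` is such a point,
the saturations of the sets `G ∩ closedBall x (1/(n+1))` cannot all cover `G` up to a null set:
a point lying in all of them lies in a closed piece accumulating at `x`, i.e. in the null piece of
`x`. So `G` contains two closed positive sets with disjoint saturations, which can be taken
arbitrarily small, and the resulting Cantor scheme has branches ending in pairwise distinct
pieces: every closed positive set meets continuum many pieces. As there are only continuum many
Borel sets, a transfinite Bernstein construction chooses for each closed positive `F` two pieces
meeting `F`, all choices distinct, and `𝓐₀` collects the first choices.
-/

open Set Filter Topology Metric Function PiNat CantorScheme
open scoped ENNReal Cardinal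

universe u

structure IsSigmaIdeal {X : Type*} (𝓘 : Set (Set X)) : Prop where
  empty_mem : ∅ ∈ 𝓘
  mono : ∀ ⦃A B : Set X⦄, A ⊆ B → B ∈ 𝓘 → A ∈ 𝓘
  iUnion_mem : ∀ f : ℕ → Set X, (∀ n, f n ∈ 𝓘) → ⋃ n, f n ∈ 𝓘

namespace IsSigmaIdeal

variable {X : Type*} {𝓘 : Set (Set X)}

theorem nonempty_of_notMem (h𝓘 : IsSigmaIdeal 𝓘) {G : Set X} (hG : G ∉ 𝓘) : G.Nonempty :=
  nonempty_iff_ne_empty.2 fun h => hG (h ▸ h𝓘.empty_mem)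

theorem iUnion_mem_of_countable (h𝓘 : IsSigmaIdeal 𝓘) {ι : Type*} [Countable ι]
    (f : ι → Set X) (hf : ∀ i, f i ∈ 𝓘) : ⋃ i, f i ∈ 𝓘 := by
  cases isEmpty_or_nonempty ι with
  | inl _ => simpa using h𝓘.empty_mem
  | inr _ =>
    obtain ⟨e, he⟩ := exists_surjective_nat ι
    rw [← he.iUnion_comp]
    exact h𝓘.iUnion_mem _ fun n => hf (e n)

theorem union_mem (h𝓘 : IsSigmaIdeal 𝓘) {A B : Set X} (hA : A ∈ 𝓘) (hB : B ∈ 𝓘) :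
    A ∪ B ∈ 𝓘 := by
  rw [union_eq_iUnion]
  exact h𝓘.iUnion_mem_of_countable _ (Bool.forall_bool.2 ⟨hB, hA⟩)

theorem exists_forall_mem_nhds_inter_notMem [TopologicalSpace X] [SecondCountableTopology X]
    (h𝓘 : IsSigmaIdeal 𝓘) {G : Set X} (hG : G ∉ 𝓘) : ∃ x, ∀ U ∈ 𝓝 x, G ∩ U ∉ 𝓘 := by
  by_contra! h
  choose U hU hGU using h
  obtain ⟨s, hs, hcover⟩ := TopologicalSpace.countable_cover_nhds hU
  have : Countable s := hs.to_subtype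
  refine hG (h𝓘.mono (fun g hg => ?_) (h𝓘.iUnion_mem_of_countable (fun x : s => G ∩ U x)
    fun x => hGU x))
  obtain ⟨x, hx, hgx⟩ := mem_iUnion₂.1 (hcover.symm ▸ mem_univ g)
  exact mem_iUnion.2 ⟨⟨x, hx⟩, hg, hgx⟩

theorem exists_subset_ediam_le [PseudoEMetricSpace X] [SecondCountableTopology X]
    (h𝓘 : IsSigmaIdeal 𝓘) {G : Set X} (hGc : IsClosed G) (hG : G ∉ 𝓘) {ε : ℝ≥0∞}
    (hε : 0 < ε) : ∃ H ⊆ G, (IsClosed H ∧ H ∉ 𝓘) ∧ ediam H ≤ ε := by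
  obtain ⟨x, hx⟩ := h𝓘.exists_forall_mem_nhds_inter_notMem hG
  refine ⟨G ∩ closedEBall x (ε / 2), inter_subset_left,
    ⟨hGc.inter isClosed_closedEBall, hx _ (closedEBall_mem_nhds x (by simpa using hε.ne'))⟩, ?_⟩
  calc ediam (G ∩ closedEBall x (ε / 2)) ≤ ediam (closedEBall x (ε / 2)) :=
        ediam_mono inter_subset_right
    _ ≤ 2 * (ε / 2) := ediam_closedEBall_le
    _ = ε := ENNReal.mul_div_cancel two_ne_zero ENNReal.ofNat_ne_top

end IsSigmaIdeal

def saturation {X : Type*} (𝓐 : Set (Set X)) (S : Set X) : Set X :=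
  ⋃₀ {A | A ∈ 𝓐 ∧ (A ∩ S).Nonempty}

section Saturation

variable {X : Type*} {𝓐 : Set (Set X)}

theorem subset_saturation {A S : Set X} (hA : A ∈ 𝓐) (hAS : (A ∩ S).Nonempty) :
    A ⊆ saturation 𝓐 S :=
  subset_sUnion_of_mem ⟨hA, hAS⟩

theorem saturation_mono {S T : Set X} (h : S ⊆ T) : saturation 𝓐 S ⊆ saturation 𝓐 T :=
  sUnion_mono fun A ⟨hA, hAS⟩ => ⟨hA, hAS.mono (inter_subset_inter_right A h)⟩

theorem mem_saturation_iff (h𝓐 : ∀ x, ∃! A, A ∈ 𝓐 ∧ x ∈ A) {x : X} {S : Set X} :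
    x ∈ saturation 𝓐 S ↔ ∀ A ∈ 𝓐, x ∈ A → (A ∩ S).Nonempty := by
  constructor
  · rintro ⟨B, ⟨hB, hBS⟩, hxB⟩ A hA hxA
    rwa [(h𝓐 x).unique ⟨hA, hxA⟩ ⟨hB, hxB⟩]
  · intro h
    obtain ⟨A, ⟨hA, hxA⟩, -⟩ := h𝓐 x
    exact subset_saturation hA (h A hA hxA) hxA

theorem subset_saturation_self (h𝓐 : ∀ x, ∃! A, A ∈ 𝓐 ∧ x ∈ A) (S : Set X) :
    S ⊆ saturation 𝓐 S := fun x hx =>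
  (mem_saturation_iff h𝓐).2 fun _ _ hxA => ⟨x, hxA, hx⟩

theorem saturation_singleton (h𝓐 : ∀ x, ∃! A, A ∈ 𝓐 ∧ x ∈ A) {A : Set X} {x : X}
    (hA : A ∈ 𝓐) (hx : x ∈ A) : saturation 𝓐 {x} = A := by
  ext y
  simp only [mem_saturation_iff h𝓐, inter_singleton_nonempty]
  obtain ⟨B, ⟨hB, hyB⟩, -⟩ := h𝓐 y
  refine ⟨fun h => ?_, fun hy C hC hyC => ?_⟩
  · rwa [(h𝓐 x).unique ⟨hA, hx⟩ ⟨hB, h B hB hyB⟩]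
  · rwa [(h𝓐 y).unique ⟨hC, hyC⟩ ⟨hA, hy⟩]

theorem saturation_singleton_mem (h𝓐 : ∀ x, ∃! A, A ∈ 𝓐 ∧ x ∈ A) (x : X) :
    saturation 𝓐 {x} ∈ 𝓐 := by
  obtain ⟨A, ⟨hA, hxA⟩, -⟩ := h𝓐 x
  rwa [saturation_singleton h𝓐 hA hxA]

theorem disjoint_saturation_of_disjoint (h𝓐 : ∀ x, ∃! A, A ∈ 𝓐 ∧ x ∈ A) {S T : Set X}
    (h : Disjoint (saturation 𝓐 S) T) : Disjoint (saturation 𝓐 S) (saturation 𝓐 T) := by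
  refine disjoint_left.2 fun x hxS hxT => ?_
  obtain ⟨A, ⟨hA, t, htA, htT⟩, hxA⟩ := hxT
  exact disjoint_left.1 h (subset_saturation hA ((mem_saturation_iff h𝓐).1 hxS A hA hxA) htA) htT

theorem disjoint_image_saturation_singleton (h𝓐 : ∀ x, ∃! A, A ∈ 𝓐 ∧ x ∈ A) {S T : Set X}
    (h : Disjoint (saturation 𝓐 S) (saturation 𝓐 T)) :
    Disjoint ((fun x => saturation 𝓐 {x}) '' S) ((fun x => saturation 𝓐 {x}) '' T) := by
  rw [disjoint_left]
  rintro _ ⟨x, hx, rfl⟩ ⟨y, hy, hyx : saturation 𝓐 {y} = saturation 𝓐 {x}⟩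
  have hx' := subset_saturation_self h𝓐 {x} (mem_singleton x)
  exact disjoint_left.1 h (saturation_mono (singleton_subset_iff.2 hx) hx')
    (saturation_mono (singleton_subset_iff.2 hy) (hyx ▸ hx'))

end Saturation

section IdealPartition

variable {X : Type*} {𝓘 𝓐 : Set (Set X)}

theorem exists_subset_diff_saturation_notMem [PseudoMetricSpace X] [SecondCountableTopology X]
    (h𝓘 : IsSigmaIdeal 𝓘) (h𝓐 : ∀ x, ∃! A, A ∈ 𝓐 ∧ x ∈ A) (hclosed : ∀ A ∈ 𝓐, IsClosed A)
    (hnull : ∀ A ∈ 𝓐, A ∈ 𝓘) {G : Set X} (hGc : IsClosed G) (hG : G ∉ 𝓘) :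
    ∃ H ⊆ G, (IsClosed H ∧ H ∉ 𝓘) ∧ G \ saturation 𝓐 H ∉ 𝓘 := by
  obtain ⟨x, hx⟩ := h𝓘.exists_forall_mem_nhds_inter_notMem hG
  set H : ℕ → Set X := fun n => G ∩ closedBall x (1 / (n + 1))
  by_contra! hsat
  have hsatH : ∀ n, G \ saturation 𝓐 (H n) ∈ 𝓘 := fun n =>
    hsat _ inter_subset_left ⟨hGc.inter isClosed_closedBall,
      hx _ (closedBall_mem_nhds x Nat.one_div_pos_of_nat)⟩
  obtain ⟨A, ⟨hA, hxA⟩, -⟩ := h𝓐 x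
  have hcover : G ⊆ (⋃ n, G \ saturation 𝓐 (H n)) ∪ A := by
    intro g hg
    by_cases hgs : ∀ n, g ∈ saturation 𝓐 (H n)
    · obtain ⟨B, ⟨hB, hgB⟩, -⟩ := h𝓐 g
      have hxB : x ∈ B := by
        refine (hclosed B hB).closure_subset (Metric.mem_closure_iff.2 fun ε hε => ?_)
        obtain ⟨n, hn⟩ := exists_nat_one_div_lt hε
        obtain ⟨b, hbB, -, hb⟩ := (mem_saturation_iff h𝓐).1 (hgs n) B hB hgB
        exact ⟨b, hbB, (mem_closedBall'.1 hb).trans_lt hn⟩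
      rw [(h𝓐 x).unique ⟨hA, hxA⟩ ⟨hB, hxB⟩]
      exact Or.inr hgB
    · obtain ⟨n, hn⟩ := not_forall.1 hgs
      exact Or.inl (mem_iUnion.2 ⟨n, hg, hn⟩)
  exact hG (h𝓘.mono hcover (h𝓘.union_mem (h𝓘.iUnion_mem _ hsatH) (hnull A hA)))

theorem exists_pair_subset_disjoint_saturation [PseudoMetricSpace X] [SecondCountableTopology X]
    [MeasurableSpace X] [OpensMeasurableSpace X]
    (h𝓘 : IsSigmaIdeal 𝓘) (h𝓐 : ∀ x, ∃! A, A ∈ 𝓐 ∧ x ∈ A) (hclosed : ∀ A ∈ 𝓐, IsClosed A)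
    (hnull : ∀ A ∈ 𝓐, A ∈ 𝓘) (hsbm : ∀ C : Set X, IsClosed C → MeasurableSet (saturation 𝓐 C))
    (hClosedBase : ∀ B : Set X, MeasurableSet B → B ∉ 𝓘 →
      ∃ F : Set X, IsClosed F ∧ F ∉ 𝓘 ∧ F ⊆ B)
    {G : Set X} (hGc : IsClosed G) (hG : G ∉ 𝓘) {ε : ℝ≥0∞} (hε : 0 < ε) :
    ∃ G₀ G₁, (G₀ ⊆ G ∧ (IsClosed G₀ ∧ G₀ ∉ 𝓘) ∧ ediam G₀ ≤ ε) ∧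
      (G₁ ⊆ G ∧ (IsClosed G₁ ∧ G₁ ∉ 𝓘) ∧ ediam G₁ ≤ ε) ∧
      Disjoint (saturation 𝓐 G₀) (saturation 𝓐 G₁) := by
  obtain ⟨H, hHG, ⟨hHc, hH⟩, hGH⟩ :=
    exists_subset_diff_saturation_notMem h𝓘 h𝓐 hclosed hnull hGc hG
  obtain ⟨K, hKc, hK, hKGH⟩ := hClosedBase _ (hGc.measurableSet.diff (hsbm H hHc)) hGH
  obtain ⟨G₀, hG₀H, hG₀, hG₀ε⟩ := h𝓘.exists_subset_ediam_le hHc hH hε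
  obtain ⟨G₁, hG₁K, hG₁, hG₁ε⟩ := h𝓘.exists_subset_ediam_le hKc hK hε
  refine ⟨G₀, G₁, ⟨hG₀H.trans hHG, hG₀, hG₀ε⟩,
    ⟨(hG₁K.trans hKGH).trans sdiff_subset, hG₁, hG₁ε⟩, disjoint_saturation_of_disjoint h𝓐 ?_⟩
  exact disjoint_sdiff_right.mono (saturation_mono hG₀H) (hG₁K.trans hKGH)

end IdealPartition

theorem CantorScheme.Disjoint.comp_map_injective {α β γ : Type*} {A : List β → Set α}
    (g : α → γ) (hA : CantorScheme.Disjoint fun l => g '' A l) :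
    Injective (g ∘ (inducedMap A).2) := by
  rintro x y (hxy : g _ = g _)
  ext1
  apply res_injective
  ext n : 1
  induction n with
  | zero => rfl
  | succ n ih =>
    rw [res_succ, res_succ, ih, List.cons.injEq]
    refine ⟨?_, rfl⟩
    by_contra hne
    have hx := mem_image_of_mem g (map_mem x (n + 1))
    have hy := mem_image_of_mem g (map_mem y (n + 1))
    rw [res_succ, ih] at hx
    rw [res_succ] at hy
    exact disjoint_left.1 (hA (res y n) hne) hx (hxy ▸ hy)

theorem exists_nat_bool_injective_comp_of_split {α β : Type*} [PseudoMetricSpace α]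
    [CompleteSpace α] {P : Set α → Prop} (g : α → β) (hP : ∀ s, P s → IsClosed s ∧ s.Nonempty)
    (hsplit : ∀ s, P s → ∀ ε : ℝ≥0∞, 0 < ε → ∃ s₀ s₁, (s₀ ⊆ s ∧ P s₀ ∧ ediam s₀ ≤ ε) ∧
      (s₁ ⊆ s ∧ P s₁ ∧ ediam s₁ ≤ ε) ∧ Disjoint (g '' s₀) (g '' s₁))
    {C : Set α} (hC : P C) : ∃ f : (ℕ → Bool) → α, range f ⊆ C ∧ Injective (g ∘ f) := by
  obtain ⟨u, -, hu_pos, hu⟩ := exists_seq_strictAnti_tendsto' (zero_lt_one' ℝ≥0∞)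
  choose C₀ C₁ h₀ h₁ hdisj using fun (s : Subtype P) (n : ℕ) => hsplit s.1 s.2 (u n) (hu_pos n).1
  let D : List Bool → Subtype P := fun l => l.rec ⟨C, hC⟩ fun a l s =>
    cond a ⟨C₁ s l.length, (h₁ s _).2.1⟩ ⟨C₀ s l.length, (h₀ s _).2.1⟩
  have hsub : ∀ l a, (D (a :: l)).1 ⊆ (D l).1 := by
    rintro l (_ | _)
    exacts [(h₀ _ _).1, (h₁ _ _).1]
  have hdiam : ∀ l a, ediam (D (a :: l)).1 ≤ u l.length := by
    rintro l (_ | _)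
    exacts [(h₀ _ _).2.2, (h₁ _ _).2.2]
  have hanti : ClosureAntitone fun l => (D l).1 :=
    CantorScheme.Antitone.closureAntitone hsub fun l => (hP _ (D l).2).1
  have hvanish : VanishingDiam fun l => (D l).1 := by
    intro x
    refine (tendsto_add_atTop_iff_nat 1).1 (tendsto_of_tendsto_of_tendsto_of_le_of_le
      tendsto_const_nhds hu (fun _ => bot_le) fun n => ?_)
    simpa only [res_succ, res_length] using hdiam (res x n) (x n)
  have hdisj' : CantorScheme.Disjoint fun l => g '' (D l).1 := by
    rintro l (_ | _) (_ | _) hab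
    exacts [absurd rfl hab, hdisj _ _, (hdisj _ _).symm, absurd rfl hab]
  have hdom := hanti.map_of_vanishingDiam hvanish fun l => (hP _ (D l).2).2
  refine ⟨fun x => (inducedMap fun l => (D l).1).2 ⟨x, hdom ▸ mem_univ x⟩,
    range_subset_iff.2 fun x => map_mem _ 0, fun x y hxy => ?_⟩
  exact congrArg Subtype.val (hdisj'.comp_map_injective g hxy)

theorem continuum_le_mk_setOf_inter_nonempty {X : Type u} {𝓘 𝓐 : Set (Set X)} [MetricSpace X]
    [CompleteSpace X] [SecondCountableTopology X] [MeasurableSpace X] [OpensMeasurableSpace X]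
    (h𝓘 : IsSigmaIdeal 𝓘) (h𝓐 : ∀ x, ∃! A, A ∈ 𝓐 ∧ x ∈ A) (hclosed : ∀ A ∈ 𝓐, IsClosed A)
    (hnull : ∀ A ∈ 𝓐, A ∈ 𝓘) (hsbm : ∀ C : Set X, IsClosed C → MeasurableSet (saturation 𝓐 C))
    (hClosedBase : ∀ B : Set X, MeasurableSet B → B ∉ 𝓘 →
      ∃ F : Set X, IsClosed F ∧ F ∉ 𝓘 ∧ F ⊆ B)
    {F : Set X} (hFc : IsClosed F) (hF : F ∉ 𝓘) :
    𝔠 ≤ #{A | A ∈ 𝓐 ∧ (A ∩ F).Nonempty} := by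
  obtain ⟨f, hfF, hf⟩ := exists_nat_bool_injective_comp_of_split (fun x => saturation 𝓐 {x})
    (P := fun s => IsClosed s ∧ s ∉ 𝓘) (fun s hs => ⟨hs.1, h𝓘.nonempty_of_notMem hs.2⟩)
    (fun s hs ε hε => by
      obtain ⟨s₀, s₁, h₀, h₁, hdisj⟩ := exists_pair_subset_disjoint_saturation h𝓘 h𝓐 hclosed
        hnull hsbm hClosedBase hs.1 hs.2 hε
      exact ⟨s₀, s₁, h₀, h₁, disjoint_image_saturation_singleton h𝓐 hdisj⟩)
    ⟨hFc, hF⟩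
  have hmem : ∀ x, saturation 𝓐 {f x} ∈ {A | A ∈ 𝓐 ∧ (A ∩ F).Nonempty} := fun x =>
    ⟨saturation_singleton_mem h𝓐 (f x), f x, subset_saturation_self h𝓐 _ rfl, hfF ⟨x, rfl⟩⟩
  calc 𝔠 = Cardinal.lift.{u} #(ℕ → Bool) := by simp
    _ ≤ Cardinal.lift.{0} #{A | A ∈ 𝓐 ∧ (A ∩ F).Nonempty} :=
      Cardinal.lift_mk_le_lift_mk_of_injective (f := fun x => ⟨_, hmem x⟩)
        fun x y h => hf (congrArg Subtype.val h)
    _ = #{A | A ∈ 𝓐 ∧ (A ∩ F).Nonempty} := Cardinal.lift_uzero _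

theorem mk_setOf_measurableSet_le_continuum (α : Type*) [MeasurableSpace α]
    [MeasurableSpace.CountablyGenerated α] : #{s : Set α | MeasurableSet s} ≤ 𝔠 := by
  obtain ⟨b, hb, hgen⟩ := MeasurableSpace.CountablyGenerated.isCountablyGenerated (α := α)
  rw [hgen]
  exact MeasurableSpace.cardinal_measurableSet_le_continuum
    ((Cardinal.le_aleph0_iff_set_countable.2 hb).trans Cardinal.aleph0_le_continuum)

theorem exists_injective_forall_mem {ι α : Type u} (S : ι → Set α) (h : ∀ i, #ι ≤ #(S i)) :
    ∃ f : ι → α, Injective f ∧ ∀ i, f i ∈ S i := by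
  obtain ⟨r, _, hr⟩ := Cardinal.exists_ord_eq ι
  -- along a well-order of type `(#ι).ord`, each `i` has fewer than `#ι` predecessors
  have hfresh : ∀ i (g : ∀ j, r j i → α), ∃ a ∈ S i, ∀ j hj, g j hj ≠ a := by
    intro i g
    have hlt : #(range fun j : {j // r j i} => g j.1 j.2) < #(S i) :=
      calc _ ≤ #{j // r j i} := Cardinal.mk_range_le
        _ = (Ordinal.typein r i).card := Ordinal.card_typein i
        _ < #ι := Cardinal.card_typein_lt i hr
        _ ≤ #(S i) := h i
    obtain ⟨a, haS, ha⟩ := not_subset.1 fun hsub => (Cardinal.mk_le_mk_of_subset hsub).not_gt hlt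
    exact ⟨a, haS, fun j hj hja => ha ⟨⟨j, hj⟩, hja⟩⟩
  choose next hnext hfresh using hfresh
  let f : ι → α := IsWellFounded.fix r next
  have hfix : ∀ i, f i = next i fun j _ => f j := IsWellFounded.fix_eq r next
  refine ⟨f, fun i j hij => ?_, fun i => hfix i ▸ hnext i _⟩
  rcases trichotomous_of r i j with hij' | hij' | hij'
  · exact absurd (hij.trans (hfix j)) (hfresh j (fun k _ => f k) i hij')
  · exact hij'
  · exact absurd (hij.symm.trans (hfix i)) (hfresh i (fun k _ => f k) j hij')

theorem exists_forall_inter_nonempty_and_diff_nonempty {ι α : Type u} {κ : Cardinal.{u}}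
    (S : ι → Set α) (hκ : ℵ₀ ≤ κ) (hι : #ι ≤ κ) (hS : ∀ i, κ ≤ #(S i)) :
    ∃ T ⊆ ⋃ i, S i, ∀ i, (S i ∩ T).Nonempty ∧ (S i \ T).Nonempty := by
  have hcard : #(ι × Bool) ≤ κ := by
    rw [Cardinal.mk_prod, Cardinal.lift_uzero, Cardinal.mk_bool, Cardinal.lift_ofNat]
    calc #ι * 2 ≤ κ * κ := mul_le_mul' hι ((Cardinal.natCast_lt_aleph0 (n := 2)).le.trans hκ)
      _ = κ := Cardinal.mul_eq_self hκ
  obtain ⟨f, hf, hfS⟩ :=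
    exists_injective_forall_mem (fun j : ι × Bool => S j.1) fun j => hcard.trans (hS j.1)
  refine ⟨range fun i => f (i, true), range_subset_iff.2 fun i => mem_iUnion.2 ⟨i, hfS (i, true)⟩,
    fun i => ⟨⟨f (i, true), hfS (i, true), i, rfl⟩, f (i, false), hfS (i, false), ?_⟩⟩
  rintro ⟨j, hj⟩
  simpa using hf hj

theorem stmt_3_general {X : Type} [TopologicalSpace X] [PolishSpace X] [Uncountable X]
    [MeasurableSpace X] [BorelSpace X]
    (𝓘 : Set (Set X))
    (hDown : ∀ A B : Set X, A ⊆ B → B ∈ 𝓘 → A ∈ 𝓘)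
    (hUnion : ∀ f : ℕ → Set X, (∀ n, f n ∈ 𝓘) → (⋃ n, f n) ∈ 𝓘)
    (hClosedBase : ∀ B : Set X, MeasurableSet B → B ∉ 𝓘 →
      ∃ F : Set X, IsClosed F ∧ F ∉ 𝓘 ∧ F ⊆ B)
    (𝓐 : Set (Set X))
    (hcover : ⋃₀ 𝓐 = univ)
    (hdisj : ∀ A ∈ 𝓐, ∀ A' ∈ 𝓐, A ≠ A' → Disjoint A A')
    (hclosed : ∀ A ∈ 𝓐, IsClosed A)
    (hnull : ∀ A ∈ 𝓐, A ∈ 𝓘)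
    (hsbm : ∀ C : Set X, IsClosed C →
      MeasurableSet (⋃₀ {A | A ∈ 𝓐 ∧ (A ∩ C).Nonempty})) :
    ∃ 𝓐₀ ⊆ 𝓐, ∀ B : Set X, MeasurableSet B → B ∉ 𝓘 →
      (⋃₀ 𝓐₀ ∩ B).Nonempty ∧ (B \ ⋃₀ 𝓐₀).Nonempty := by
  let := TopologicalSpace.upgradeIsCompletelyMetrizable X
  have h𝓐 : ∀ x, ∃! A, A ∈ 𝓐 ∧ x ∈ A := fun x => by
    obtain ⟨A, hA, hxA⟩ := mem_sUnion.1 (hcover ▸ mem_univ x)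
    refine ⟨A, ⟨hA, hxA⟩, fun A' ⟨hA', hxA'⟩ => ?_⟩
    by_contra hne
    exact disjoint_left.1 (hdisj A' hA' A hA hne) hxA' hxA
  obtain ⟨A, ⟨hA, -⟩, -⟩ := h𝓐 (Classical.arbitrary X)
  have h𝓘 : IsSigmaIdeal 𝓘 := ⟨hDown _ _ (empty_subset A) (hnull A hA), hDown, hUnion⟩
  let ι := {F : Set X // IsClosed F ∧ F ∉ 𝓘}
  have hι : #ι ≤ 𝔠 := (Cardinal.mk_subtype_mono fun F hF => hF.1.measurableSet).trans
    (mk_setOf_measurableSet_le_continuum X)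
  obtain ⟨𝓐₀, h𝓐₀, hsplit⟩ := exists_forall_inter_nonempty_and_diff_nonempty
    (fun F : ι => {A | A ∈ 𝓐 ∧ (A ∩ F.1).Nonempty}) Cardinal.aleph0_le_continuum hι fun F =>
    continuum_le_mk_setOf_inter_nonempty h𝓘 h𝓐 hclosed hnull hsbm hClosedBase F.2.1 F.2.2
  have h𝓐₀𝓐 : 𝓐₀ ⊆ 𝓐 := h𝓐₀.trans (iUnion_subset fun F => sep_subset _ _)
  refine ⟨𝓐₀, h𝓐₀𝓐, fun B hB hBI => ?_⟩
  obtain ⟨F, hFc, hFI, hFB⟩ := hClosedBase B hB hBI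
  obtain ⟨⟨A, ⟨-, x, hxA, hxF⟩, hA₀⟩, ⟨A', ⟨hA', y, hyA', hyF⟩, hA'₀⟩⟩ := hsplit ⟨F, hFc, hFI⟩
  refine ⟨⟨x, ⟨A, hA₀, hxA⟩, hFB hxF⟩, y, hFB hyF, fun ⟨A'', hA''₀, hyA''⟩ => hA'₀ ?_⟩
  rwa [(h𝓐 y).unique ⟨hA', hyA'⟩ ⟨h𝓐₀𝓐 hA''₀, hyA''⟩]

theorem stmt_3 {X : Type} [TopologicalSpace X] [PolishSpace X] [Uncountable X]
    [MeasurableSpace X] [BorelSpace X]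
    (𝓘 : Set (Set X))
    (hDown : ∀ A B : Set X, A ⊆ B → B ∈ 𝓘 → A ∈ 𝓘)
    (hUnion : ∀ f : ℕ → Set X, (∀ n, f n ∈ 𝓘) → (⋃ n, f n) ∈ 𝓘)
    (hProper : (univ : Set X) ∉ 𝓘)
    (hSing : ∀ x : X, ({x} : Set X) ∈ 𝓘)
    (hBase : ∀ A ∈ 𝓘, ∃ B : Set X, A ⊆ B ∧ MeasurableSet B ∧ B ∈ 𝓘)
    (hClosedBase : ∀ B : Set X, MeasurableSet B → B ∉ 𝓘 →
      ∃ F : Set X, IsClosed F ∧ F ∉ 𝓘 ∧ F ⊆ B)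
    (𝓐 : Set (Set X))
    (hcover : ⋃₀ 𝓐 = univ)
    (hdisj : ∀ A ∈ 𝓐, ∀ A' ∈ 𝓐, A ≠ A' → Disjoint A A')
    (hne : ∀ A ∈ 𝓐, A.Nonempty)
    (hclosed : ∀ A ∈ 𝓐, IsClosed A)
    (hnull : ∀ A ∈ 𝓐, A ∈ 𝓘)
    (hsbm : ∀ C : Set X, IsClosed C →
      MeasurableSet (⋃₀ {A | A ∈ 𝓐 ∧ (A ∩ C).Nonempty})) :
    ∃ 𝓐₀ ⊆ 𝓐, ∀ B : Set X, MeasurableSet B → B ∉ 𝓘 →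
      (⋃₀ 𝓐₀ ∩ B).Nonempty ∧ (B \ ⋃₀ 𝓐₀).Nonempty :=
  stmt_3_general 𝓘 hDown hUnion hClosedBase 𝓐 hcover hdisj hclosed hnull hsbm
end

section
/- Let (X, 𝓘) be a Polish ideal space and Y a Polish space. Suppose f : X → Y is B̄(X)-measurable (the preimage of every open subset of Y belongs to the 𝓘-completion B̄(X)) and f⁻¹({y}) ∈ 𝓘 for every y ∈ Y. Then there exists a set T ⊆ Y such that f⁻¹(T) is completely 𝓘-nonmeasurable. -/
/-!
A σ-ideal `𝓘` with a Borel base is the null ideal of the `{0, ∞}`-valued measure that vanishes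
exactly on `𝓘`. Hence `f` is null-measurable, so it agrees with a Borel map `g` off a Borel set
`N ∈ 𝓘`. For an `𝓘`-positive Borel set `B` the image `f '' B` contains the analytic set
`g '' (B \ N)`, which is uncountable because the fibres of `f` lie in `𝓘`; by the perfect set
theorem for analytic sets it has cardinality `𝔠`. (That theorem runs a Cantor scheme through closed
sets all of whose points are condensation points of the parametrising map, splitting each into two
small such sets with disjoint images.) As there are only `𝔠` Borel sets, a
Bernstein-type transfinite construction of length `𝔠` gives `T` meeting and missing every such
image.
-/

open Set Function Cardinal Filter Topology MeasureTheory CantorScheme PiNat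
open scoped ENNReal Ordinal

universe u

theorem exists_injective_forall_mem_of_mk_le {I Y : Type u} [LinearOrder I] [WellFoundedLT I]
    (hI : (#I).ord = typeLT I) (A : I → Set Y) (hA : ∀ i, #I ≤ #(A i)) :
    ∃ q : I → Y, Injective q ∧ ∀ i, q i ∈ A i := by
  have hfresh : ∀ i (v : ∀ j < i, Y), (A i \ range fun j : Iio i => v j j.2).Nonempty := by
    intro i v
    exact sdiff_nonempty.2 fun hsub => (mk_Iio_lt i hI).not_ge
      ((hA i).trans ((mk_le_mk_of_subset hsub).trans mk_range_le))
  let q : I → Y := WellFoundedLT.fix fun i v => (hfresh i v).some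
  have hq : ∀ i, q i ∈ A i \ range fun j : Iio i => q j := fun i => by
    have : q i = (hfresh i fun j _ => q j).some := WellFoundedLT.fix_eq _ i
    rw [this]
    exact (hfresh i fun j _ => q j).some_mem
  refine ⟨q, fun i j hij => ?_, fun i => (hq i).1⟩
  by_contra hne
  rcases lt_or_gt_of_ne hne with h | h
  · exact (hq j).2 ⟨⟨i, h⟩, hij⟩
  · exact (hq i).2 ⟨⟨j, h⟩, hij.symm⟩

theorem exists_inter_nonempty_and_diff_nonempty_of_mk_le {ι Y : Type u} {κ : Cardinal}
    (hκ : ℵ₀ ≤ κ) (A : ι → Set Y) (hι : #ι ≤ κ) (hA : ∀ i, κ ≤ #(A i)) :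
    ∃ T : Set Y, ∀ i, (T ∩ A i).Nonempty ∧ (A i \ T).Nonempty := by
  rcases isEmpty_or_nonempty ι with hι₀ | hι₀
  · exact ⟨∅, isEmptyElim⟩
  -- Each index gets two slots: the point chosen in the left one goes into `T`, the other stays out.
  obtain ⟨e⟩ : Nonempty (ι ⊕ ι ↪ κ.ord.ToType) := by
    rw [← Cardinal.le_def, mk_ord_toType, mk_sum, Cardinal.lift_id]
    exact add_le_of_le hκ hι hι
  obtain ⟨q, hq, hqA⟩ := exists_injective_forall_mem_of_mk_le (by simp)
    (fun k => Sum.elim A A (invFun e k)) fun k => by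
      rw [mk_ord_toType]
      cases invFun e k <;> apply hA
  have hqe : ∀ p, q (e p) ∈ Sum.elim A A p := fun p => by
    simpa only [leftInverse_invFun e.injective p] using hqA (e p)
  refine ⟨range fun i => q (e (.inl i)), fun i =>
    ⟨⟨_, ⟨i, rfl⟩, hqe (.inl i)⟩, ⟨_, hqe (.inr i), ?_⟩⟩⟩
  rintro ⟨j, hj⟩
  cases e.injective (hq hj)

section ImageCondensed

variable {P Y : Type*} [TopologicalSpace P] {g : P → Y} {D : Set P}

def ImageCondensed (g : P → Y) (D : Set P) : Prop :=
  IsClosed D ∧ ∀ x ∈ D, ∀ U ∈ 𝓝 x, ¬(g '' (D ∩ U)).Countable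

theorem ImageCondensed.closure_inter_isOpen (hD : ImageCondensed g D) {U : Set P} (hU : IsOpen U) :
    ImageCondensed g (closure (D ∩ U)) := by
  refine ⟨isClosed_closure, fun x hx E hE hcount => ?_⟩
  obtain ⟨y, hyE, hyD, hyU⟩ :=
    mem_closure_iff.1 hx (interior E) isOpen_interior (mem_interior_iff_mem_nhds.2 hE)
  refine hD.2 y hyD (U ∩ interior E) (inter_mem (hU.mem_nhds hyU) (isOpen_interior.mem_nhds hyE))
    (hcount.mono (image_mono ?_))
  rintro z ⟨hzD, hzU, hzE⟩
  exact ⟨subset_closure ⟨hzD, hzU⟩, interior_subset hzE⟩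

theorem exists_imageCondensed_nonempty_of_not_countable_range [SecondCountableTopology P]
    (h : ¬(range g).Countable) :
    ∃ D, ImageCondensed g D ∧ D.Nonempty := by
  obtain ⟨b, hbc, -, hb⟩ := TopologicalSpace.exists_countable_basis P
  set V := ⋃ U ∈ {U ∈ b | (g '' U).Countable}, U
  have hV : (g '' V).Countable := by
    rw [image_iUnion₂]
    exact (hbc.mono (sep_subset _ _)).biUnion fun U hU => hU.2
  refine ⟨Vᶜ, ⟨(isOpen_biUnion fun U hU => hb.isOpen hU.1).isClosed_compl, ?_⟩, ?_⟩
  · intro x hx E hE hcount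
    obtain ⟨U, hUb, hxU, hUE⟩ := hb.mem_nhds_iff.1 hE
    refine hx (mem_biUnion (x := U) ⟨hUb, (hcount.union hV).mono ?_⟩ hxU)
    rintro _ ⟨z, hzU, rfl⟩
    by_cases hzV : z ∈ V
    · exact Or.inr (mem_image_of_mem g hzV)
    · exact Or.inl (mem_image_of_mem g ⟨hzV, hUE hzU⟩)
  · refine nonempty_compl.2 fun hVuniv => h ?_
    rwa [← image_univ, ← hVuniv]

end ImageCondensed

section Splitting

variable {P Y : Type*} [PseudoEMetricSpace P] [TopologicalSpace Y] {g : P → Y} {D : Set P}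

theorem ImageCondensed.exists_subset_ediam_le (hD : ImageCondensed g D) (hg : Continuous g)
    {x : P} (hx : x ∈ D) {V : Set Y} (hV : IsOpen V) (hxV : g x ∈ V) {ε : ℝ≥0∞} (hε : 0 < ε) :
    ∃ D' ⊆ D, ImageCondensed g D' ∧ D'.Nonempty ∧ Metric.ediam D' ≤ ε ∧ g '' D' ⊆ V := by
  obtain ⟨r, hr, hrV⟩ := Metric.nhds_basis_closedEBall.mem_iff.1 (hV.preimage hg |>.mem_nhds hxV)
  set s := min r (ε / 2)
  have hs : 0 < s := lt_min hr (ENNReal.half_pos hε.ne')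
  have hsub : closure (D ∩ Metric.eball x s) ⊆ Metric.closedEBall x s :=
    closure_minimal (inter_subset_right.trans Metric.eball_subset_closedEBall)
      Metric.isClosed_closedEBall
  refine ⟨_, closure_minimal inter_subset_left hD.1, hD.closure_inter_isOpen Metric.isOpen_eball,
    ⟨x, subset_closure ⟨hx, Metric.mem_eball_self hs⟩⟩, ?_, ?_⟩
  · calc Metric.ediam _ ≤ 2 * s := (Metric.ediam_mono hsub).trans Metric.ediam_closedEBall_le
      _ ≤ 2 * (ε / 2) := by gcongr; exact min_le_right _ _
      _ = ε := ENNReal.mul_div_cancel two_ne_zero ENNReal.ofNat_ne_top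
  · exact image_subset_iff.2 <| hsub.trans <|
      (Metric.closedEBall_subset_closedEBall (min_le_left _ _)).trans hrV

theorem ImageCondensed.exists_split [T2Space Y] (hD : ImageCondensed g D) (hg : Continuous g)
    (hne : D.Nonempty) {ε : ℝ≥0∞} (hε : 0 < ε) :
    ∃ C : Bool → Set P,
      (∀ a, C a ⊆ D ∧ ImageCondensed g (C a) ∧ (C a).Nonempty ∧ Metric.ediam (C a) ≤ ε) ∧
      Disjoint (g '' C false) (g '' C true) := by
  obtain ⟨x, hx⟩ := hne
  have hnt : (g '' D).Nontrivial :=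
    not_subsingleton_iff.1 fun h => hD.2 x hx univ univ_mem (by simpa using h.countable)
  obtain ⟨_, ⟨x₀, hx₀, rfl⟩, _, ⟨x₁, hx₁, rfl⟩, hne⟩ := hnt
  obtain ⟨V₀, V₁, hV₀, hV₁, h₀, h₁, hV⟩ := t2_separation hne
  obtain ⟨D₀, hD₀, hD₀', hne₀, hdiam₀, hV₀D₀⟩ := hD.exists_subset_ediam_le hg hx₀ hV₀ h₀ hε
  obtain ⟨D₁, hD₁, hD₁', hne₁, hdiam₁, hV₁D₁⟩ := hD.exists_subset_ediam_le hg hx₁ hV₁ h₁ hε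
  refine ⟨fun a => bif a then D₁ else D₀, ?_, hV.mono hV₀D₀ hV₁D₁⟩
  rintro (_ | _)
  exacts [⟨hD₀, hD₀', hne₀, hdiam₀⟩, ⟨hD₁, hD₁', hne₁, hdiam₁⟩]

end Splitting

theorem CantorScheme.Disjoint.eq_of_forall_mem {β α : Type*} {A : List β → Set α}
    (hA : CantorScheme.Disjoint A) {x y : ℕ → β} {z : α} (hx : ∀ n, z ∈ A (res x n))
    (hy : ∀ n, z ∈ A (res y n)) : x = y := by
  apply res_injective
  ext n : 1
  induction n with
  | zero => simp
  | succ n ih =>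
    rw [res_succ, res_succ, ih]
    congr 1
    by_contra hne
    have hxn := hx (n + 1)
    rw [res_succ, ih] at hxn
    have hyn := hy (n + 1)
    rw [res_succ] at hyn
    exact disjoint_left.1 (hA _ hne) hxn hyn

theorem Continuous.exists_nat_bool_injection_of_not_countable_range {P Y : Type*}
    [TopologicalSpace P] [PolishSpace P] [TopologicalSpace Y] [T2Space Y] {g : P → Y}
    (hg : Continuous g) (h : ¬(range g).Countable) :
    ∃ f : (ℕ → Bool) → Y, range f ⊆ range g ∧ Continuous f ∧ Injective f := by
  let := TopologicalSpace.upgradeIsCompletelyMetrizable P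
  obtain ⟨u, -, hu_mem, hu⟩ := exists_seq_strictAnti_tendsto' (zero_lt_one' ℝ≥0∞)
  obtain ⟨D, hD, hne⟩ := exists_imageCondensed_nonempty_of_not_countable_range h
  choose C hC hdisj using fun (E : {E : Set P // ImageCondensed g E ∧ E.Nonempty}) (n : ℕ) =>
    E.2.1.exists_split hg E.2.2 (hu_mem n).1
  let S : List Bool → {E : Set P // ImageCondensed g E ∧ E.Nonempty} := fun l =>
    l.rec ⟨D, hD, hne⟩ fun a l E => ⟨C E l.length a, (hC E _ a).2.1, (hC E _ a).2.2.1⟩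
  let A : List Bool → Set P := fun l => (S l).1
  have hanti : ClosureAntitone A :=
    CantorScheme.Antitone.closureAntitone (fun l a => (hC (S l) _ a).1) fun l => (S l).2.1.1
  have hdiam : VanishingDiam A := by
    intro x
    refine (tendsto_add_atTop_iff_nat 1).1 <|
      tendsto_of_tendsto_of_tendsto_of_le_of_le tendsto_const_nhds hu (fun _ => bot_le)
        fun n => ?_
    simpa [A, S, res_succ] using (hC (S (res x n)) (res x n).length (x n)).2.2.2
  have hdom := hanti.map_of_vanishingDiam hdiam fun l => (S l).2.2
  let φ : (ℕ → Bool) → P := fun x => (inducedMap A).2 ⟨x, hdom ▸ mem_univ x⟩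
  have hφ : ∀ x n, φ x ∈ A (res x n) := fun x n => map_mem _ n
  have hgA : CantorScheme.Disjoint fun l => g '' A l := by
    rintro l (_ | _) (_ | _) hab
    exacts [absurd rfl hab, hdisj _ _, (hdisj _ _).symm, absurd rfl hab]
  refine ⟨g ∘ φ, range_comp_subset_range _ _, hg.comp (hdiam.map_continuous.comp (by fun_prop)),
    fun x y hxy => hgA.eq_of_forall_mem (fun n => mem_image_of_mem g (hφ x n)) fun n => ?_⟩
  rw [show g (φ x) = g (φ y) from hxy]
  exact mem_image_of_mem g (hφ y n)

theorem MeasureTheory.AnalyticSet.continuum_le_mk_of_not_countable {Y : Type*}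
    [TopologicalSpace Y] [T2Space Y] {A : Set Y} (hA : MeasureTheory.AnalyticSet A)
    (h : ¬A.Countable) : 𝔠 ≤ #A := by
  rw [MeasureTheory.AnalyticSet] at hA
  rcases hA with rfl | ⟨g, hg, rfl⟩
  · exact absurd countable_empty h
  obtain ⟨f, hfg, -, hf⟩ := hg.exists_nat_bool_injection_of_not_countable_range h
  have hrange : #(range f) = lift #(ℕ → Bool) := by
    simpa only [lift_uzero] using mk_range_eq_of_injective hf
  calc 𝔠 = #(range f) := by simp [hrange]
    _ ≤ #(range g) := mk_le_mk_of_subset hfg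

structure IsSigmaIdeal_s6 {X : Type*} (𝓘 : Set (Set X)) : Prop where
  empty_mem : ∅ ∈ 𝓘
  mono : ∀ A B : Set X, A ⊆ B → B ∈ 𝓘 → A ∈ 𝓘
  iUnion_mem : ∀ f : ℕ → Set X, (∀ n, f n ∈ 𝓘) → ⋃ n, f n ∈ 𝓘

namespace IsSigmaIdeal_s6

variable {X : Type*} {𝓘 : Set (Set X)} {s : Set X}

open Classical in
noncomputable def outerMeasure (h : IsSigmaIdeal_s6 𝓘) : OuterMeasure X where
  measureOf s := if s ∈ 𝓘 then 0 else ⊤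
  empty := if_pos h.empty_mem
  mono {s t} hst := by
    by_cases ht : t ∈ 𝓘
    · simp [ht, h.mono s t hst ht]
    · simp [ht]
  iUnion_nat s _ := by
    by_cases hs : ∀ n, s n ∈ 𝓘
    · simp [h.iUnion_mem s hs]
    · obtain ⟨n, hn⟩ := not_forall.1 hs
      refine le_top.trans (le_of_eq_of_le ?_ (ENNReal.le_tsum n))
      simp [hn]

theorem outerMeasure_of_mem (h : IsSigmaIdeal_s6 𝓘) (hs : s ∈ 𝓘) : h.outerMeasure s = 0 := if_pos hs

theorem outerMeasure_of_notMem (h : IsSigmaIdeal_s6 𝓘) (hs : s ∉ 𝓘) : h.outerMeasure s = ⊤ :=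
  if_neg hs

variable [MeasurableSpace X]

noncomputable def measure (h : IsSigmaIdeal_s6 𝓘) : Measure X :=
  h.outerMeasure.toMeasure fun _ _ => OuterMeasure.isCaratheodory_iff_le _ |>.2 fun t => by
    by_cases ht : t ∈ 𝓘
    · rw [h.outerMeasure_of_mem (h.mono _ _ inter_subset_left ht),
        h.outerMeasure_of_mem (h.mono _ _ sdiff_subset ht), add_zero]
      exact zero_le
    · exact (h.outerMeasure_of_notMem ht).symm ▸ le_top

theorem measure_eq_zero_iff (h : IsSigmaIdeal_s6 𝓘)
    (hBase : ∀ A ∈ 𝓘, ∃ B : Set X, A ⊆ B ∧ MeasurableSet B ∧ B ∈ 𝓘) :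
    h.measure s = 0 ↔ s ∈ 𝓘 := by
  refine ⟨fun hs => ?_, fun hs => ?_⟩
  · obtain ⟨t, hst, htm, ht⟩ := exists_measurable_superset_of_null hs
    rw [measure, toMeasure_apply _ _ htm] at ht
    exact h.mono s t hst (not_not.1 fun htI => by simp [h.outerMeasure_of_notMem htI] at ht)
  · obtain ⟨t, hst, htm, htI⟩ := hBase s hs
    refine measure_mono_null hst ?_
    rw [measure, toMeasure_apply _ _ htm, h.outerMeasure_of_mem htI]

end IsSigmaIdeal_s6

theorem MeasurableSpace.mk_measurableSet_le_continuum {X : Type*} [MeasurableSpace X]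
    [MeasurableSpace.CountablyGenerated X] : #{s : Set X // MeasurableSet s} ≤ 𝔠 := by
  obtain ⟨b, hb, rfl⟩ := MeasurableSpace.CountablyGenerated.isCountablyGenerated (α := X)
  exact cardinal_measurableSet_le_continuum (hb.le_aleph0.trans aleph0_le_continuum)

theorem MeasureTheory.NullMeasurable.continuum_le_mk_image {X Y : Type*} [MeasurableSpace X]
    [StandardBorelSpace X] [TopologicalSpace Y] [T2Space Y] [SecondCountableTopology Y]
    [MeasurableSpace Y] [BorelSpace Y] {μ : Measure X} {f : X → Y} (hf : NullMeasurable f μ)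
    (hfib : ∀ y, μ (f ⁻¹' {y}) = 0) {B : Set X} (hB : MeasurableSet B) (hμB : μ B ≠ 0) :
    𝔠 ≤ #(f '' B) := by
  obtain ⟨g, hg, hfg⟩ := hf.aemeasurable
  set N := toMeasurable μ {x | f x ≠ g x}
  have hN : μ N = 0 := by rwa [measure_toMeasurable, ← ae_iff]
  have hfgN : EqOn f g (B \ N) := fun x hx =>
    not_not.1 fun hne => hx.2 (subset_toMeasurable _ _ hne)
  have hcover : B ⊆ N ∪ ⋃ y ∈ f '' (B \ N), f ⁻¹' {y} := fun x hx =>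
    by_cases (fun hxN : x ∈ N => Or.inl hxN)
      fun hxN => Or.inr (mem_biUnion (mem_image_of_mem f ⟨hx, hxN⟩) rfl)
  have hcount : ¬(f '' (B \ N)).Countable := fun hc => hμB <| measure_mono_null hcover
    (measure_union_null hN ((measure_biUnion_null_iff hc).2 fun y _ => hfib y))
  have hana : AnalyticSet (f '' (B \ N)) :=
    hfgN.image_eq ▸ (hB.diff (measurableSet_toMeasurable _ _)).analyticSet_image hg
  exact (hana.continuum_le_mk_of_not_countable hcount).trans
    (mk_le_mk_of_subset (image_mono sdiff_subset))

theorem stmt_6_general {X : Type} [TopologicalSpace X] [PolishSpace X] [Uncountable X]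
    [MeasurableSpace X] [BorelSpace X]
    {Y : Type} [TopologicalSpace Y] [PolishSpace Y] [MeasurableSpace Y] [BorelSpace Y]
    (𝓘 : Set (Set X))
    (hDown : ∀ A B : Set X, A ⊆ B → B ∈ 𝓘 → A ∈ 𝓘)
    (hUnion : ∀ f : ℕ → Set X, (∀ n, f n ∈ 𝓘) → (⋃ n, f n) ∈ 𝓘)
    (hBase : ∀ A ∈ 𝓘, ∃ B : Set X, A ⊆ B ∧ MeasurableSet B ∧ B ∈ 𝓘)
    (f : X → Y)
    (hf : ∀ U : Set Y, IsOpen U →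
      MeasurableSet[MeasurableSpace.generateFrom ({s : Set X | MeasurableSet s} ∪ 𝓘)] (f ⁻¹' U))
    (hfib : ∀ y : Y, f ⁻¹' {y} ∈ 𝓘) :
    ∃ T : Set Y, ∀ B : Set X, MeasurableSet B → B ∉ 𝓘 →
      (f ⁻¹' T ∩ B).Nonempty ∧ (B \ f ⁻¹' T).Nonempty := by
  have h𝓘 : IsSigmaIdeal_s6 𝓘 :=
    ⟨hDown _ _ (empty_subset _) (hfib (f (Classical.arbitrary X))), hDown, hUnion⟩
  have hnull (s : Set X) : h𝓘.measure s = 0 ↔ s ∈ 𝓘 := h𝓘.measure_eq_zero_iff hBase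
  have hfμ : NullMeasurable f h𝓘.measure := measurable_of_isOpen fun U hU =>
    MeasurableSpace.generateFrom_le (fun s hs => hs.elim MeasurableSet.nullMeasurableSet
      fun hs => NullMeasurableSet.of_null ((hnull s).2 hs)) _ (hf U hU)
  have hpos : #{B : Set X // MeasurableSet B ∧ B ∉ 𝓘} ≤ 𝔠 :=
    (mk_subtype_mono fun _ hB => hB.1).trans MeasurableSpace.mk_measurableSet_le_continuum
  obtain ⟨T, hT⟩ := exists_inter_nonempty_and_diff_nonempty_of_mk_le aleph0_le_continuum
    (fun B : {B : Set X // MeasurableSet B ∧ B ∉ 𝓘} => f '' B.1) hpos fun B =>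
      hfμ.continuum_le_mk_image (fun y => (hnull _).2 (hfib y)) B.2.1 ((hnull _).not.2 B.2.2)
  refine ⟨T, fun B hB hBI => ?_⟩
  obtain ⟨⟨_, hyT, x, hxB, rfl⟩, ⟨_, ⟨x', hx'B, rfl⟩, hx'T⟩⟩ := hT ⟨B, hB, hBI⟩
  exact ⟨⟨x, hyT, hxB⟩, ⟨x', hx'B, hx'T⟩⟩

theorem stmt_6 {X : Type} [TopologicalSpace X] [PolishSpace X] [Uncountable X]
    [MeasurableSpace X] [BorelSpace X]
    {Y : Type} [TopologicalSpace Y] [PolishSpace Y] [MeasurableSpace Y] [BorelSpace Y]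
    (𝓘 : Set (Set X))
    (hDown : ∀ A B : Set X, A ⊆ B → B ∈ 𝓘 → A ∈ 𝓘)
    (hUnion : ∀ f : ℕ → Set X, (∀ n, f n ∈ 𝓘) → (⋃ n, f n) ∈ 𝓘)
    (hProper : (univ : Set X) ∉ 𝓘)
    (hSing : ∀ x : X, ({x} : Set X) ∈ 𝓘)
    (hBase : ∀ A ∈ 𝓘, ∃ B : Set X, A ⊆ B ∧ MeasurableSet B ∧ B ∈ 𝓘)
    (f : X → Y)
    (hf : ∀ U : Set Y, IsOpen U →
      MeasurableSet[MeasurableSpace.generateFrom ({s : Set X | MeasurableSet s} ∪ 𝓘)] (f ⁻¹' U))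
    (hfib : ∀ y : Y, f ⁻¹' {y} ∈ 𝓘) :
    ∃ T : Set Y, ∀ B : Set X, MeasurableSet B → B ∉ 𝓘 →
      (f ⁻¹' T ∩ B).Nonempty ∧ (B \ f ⁻¹' T).Nonempty :=
  stmt_6_general 𝓘 hDown hUnion hBase f hf hfib
end
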